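/- arXiv:2601.07512 — 4 statements merged into one kernel-verified Lean document; each statement's English description precedes it below -/
import Mathlib

section
/- Let d be a positive integer, let σ : ℝ → ℝ be differentiable with σ(t) > 0 for all t, and let μ : ℝ → ℝ^d (Euclidean space) be differentiable. Define the Gaussian conditional density p(t,x) = (2π σ(t)²)^{-d/2} exp(−‖x − μ(t)‖² / (2σ(t)²)) and the velocity field u(t,x) = (σ'(t)/σ(t))·(x − μ(t)) + μ'(t). Then the pair (p, u) satisfies the continuity equation: for every t and every x ∈ ℝ^d, ∂_t p(t,x) + div_x( p(t,·) u(t,·) )(x) = 0, where div_x denotes the spatial divergence (the trace of the spatial Fréchet derivative of the vector field x ↦ p(t,x) u(t,x)). -/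
/-!
Write `q = x - μ t`. Both terms of the continuity equation are `p` times a polynomial in `q`.
Differentiating in time, `∂ₜ log p = -d σ'/σ + ⟪q, μ'⟫/σ² + ‖q‖² σ'/σ³`. In space,
`∇p = -(p/σ²) q` and `div u = d σ'/σ`, so the product rule gives
`div (p u) = p d σ'/σ - (p/σ²) ⟪q, u⟫` with `⟪q, u⟫ = (σ'/σ) ‖q‖² + ⟪q, μ'⟫`, and the sum cancels.
-/

open Real

/-- The divergence of a vector field `v` on Euclidean space at `x`:
the trace of its Fréchet derivative at `x`. -/
noncomputable def divergence {d : ℕ}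
    (v : EuclideanSpace ℝ (Fin d) → EuclideanSpace ℝ (Fin d))
    (x : EuclideanSpace ℝ (Fin d)) : ℝ :=
  LinearMap.trace ℝ (EuclideanSpace ℝ (Fin d)) (fderiv ℝ v x).toLinearMap

open scoped RealInnerProductSpace

section Divergence

variable {d : ℕ} {x : EuclideanSpace ℝ (Fin d)}

theorem HasFDerivAt.divergence_eq {v : EuclideanSpace ℝ (Fin d) → EuclideanSpace ℝ (Fin d)}
    {v' : EuclideanSpace ℝ (Fin d) →L[ℝ] EuclideanSpace ℝ (Fin d)} (hv : HasFDerivAt v v' x) :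
    divergence v x = LinearMap.trace ℝ _ v'.toLinearMap := by
  rw [divergence, hv.fderiv]

theorem divergence_smul {f : EuclideanSpace ℝ (Fin d) → ℝ}
    {f' : EuclideanSpace ℝ (Fin d) →L[ℝ] ℝ}
    {v : EuclideanSpace ℝ (Fin d) → EuclideanSpace ℝ (Fin d)}
    {v' : EuclideanSpace ℝ (Fin d) →L[ℝ] EuclideanSpace ℝ (Fin d)}
    (hf : HasFDerivAt f f' x) (hv : HasFDerivAt v v' x) :
    divergence (fun y => f y • v y) x = f x * LinearMap.trace ℝ _ v'.toLinearMap + f' (v x) := by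
  rw [HasFDerivAt.divergence_eq (v := fun y => f y • v y) (hf.smul hv),
    ContinuousLinearMap.toLinearMap_add, map_add, ContinuousLinearMap.toLinearMap_smul, map_smul,
    smul_eq_mul]
  congr 1
  exact LinearMap.trace_smulRight _ _

end Divergence

section Gaussian

variable {E : Type*} [NormedAddCommGroup E] [InnerProductSpace ℝ E]

noncomputable def isotropicGaussianDensity (s : ℝ) (m x : E) : ℝ :=
  (2 * π * s ^ 2) ^ (-(Module.finrank ℝ E : ℝ) / 2) * exp (-‖x - m‖ ^ 2 / (2 * s ^ 2))

theorem hasFDerivAt_isotropicGaussianDensity (s : ℝ) (m x : E) :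
    HasFDerivAt (isotropicGaussianDensity s m)
      ((-isotropicGaussianDensity s m x / s ^ 2) • innerSL ℝ (x - m)) x := by
  have hexponent : HasFDerivAt (fun y => -‖y - m‖ ^ 2 / (2 * s ^ 2))
      ((-1 / s ^ 2) • innerSL ℝ (x - m)) x := by
    simp_rw [div_eq_mul_inv (-‖_ - m‖ ^ 2)]
    refine (((hasFDerivAt_id x).sub_const m).norm_sq.neg.mul_const
      (2 * s ^ 2)⁻¹).congr_fderiv ?_
    ext y
    simp only [id_eq, map_sub, ContinuousLinearMap.comp_id, smul_neg, neg_apply, smul_apply,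
      sub_apply, coe_innerSL_apply, nsmul_eq_mul, Nat.cast_ofNat, smul_eq_mul]
    ring
  refine (hexponent.exp.const_mul
    ((2 * π * s ^ 2) ^ (-(Module.finrank ℝ E : ℝ) / 2))).congr_fderiv ?_
  ext y
  simp only [map_sub, smul_apply, sub_apply, coe_innerSL_apply, smul_eq_mul,
    isotropicGaussianDensity]
  ring

theorem HasDerivAt.isotropicGaussianDensity {σ : ℝ → ℝ} {σ' : ℝ} {μ : ℝ → E} {μ' : E} {t : ℝ}
    (hσ : HasDerivAt σ σ' t) (hμ : HasDerivAt μ μ' t) (hσt : σ t ≠ 0) (x : E) :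
    HasDerivAt (fun τ => isotropicGaussianDensity (σ τ) (μ τ) x)
      (isotropicGaussianDensity (σ t) (μ t) x *
        (-(Module.finrank ℝ E) * σ' / σ t + ⟪x - μ t, μ'⟫ / σ t ^ 2
          + ‖x - μ t‖ ^ 2 * σ' / σ t ^ 3)) t := by
  have hvar := hσ.fun_pow 2
  have hbase : 0 < 2 * π * σ t ^ 2 := by positivity
  have hnormalizer := (hvar.const_mul (2 * π)).rpow_const (p := -(Module.finrank ℝ E : ℝ) / 2)
    (Or.inl hbase.ne')
  have hexponent := (hμ.const_sub x).norm_sq.fun_neg.fun_div (hvar.const_mul 2) (by positivity)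
  refine (hnormalizer.mul hexponent.exp).congr_deriv ?_
  simp only [_root_.isotropicGaussianDensity, rpow_sub hbase, rpow_one, inner_neg_right]
  field_simp
  ring

end Gaussian

theorem gaussian_conditional_continuity_equation_general
    (d : ℕ)
    (σ : ℝ → ℝ) (hσ : Differentiable ℝ σ) (hσpos : ∀ t, 0 < σ t)
    (μ : ℝ → EuclideanSpace ℝ (Fin d)) (hμ : Differentiable ℝ μ)
    (p : ℝ → EuclideanSpace ℝ (Fin d) → ℝ)
    (hp : ∀ t x, p t x =
      (2 * π * (σ t) ^ 2) ^ (-(d : ℝ) / 2) *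
        Real.exp (-‖x - μ t‖ ^ 2 / (2 * (σ t) ^ 2)))
    (u : ℝ → EuclideanSpace ℝ (Fin d) → EuclideanSpace ℝ (Fin d))
    (hu : ∀ t x, u t x = (deriv σ t / σ t) • (x - μ t) + deriv μ t) :
    ∀ (t : ℝ) (x : EuclideanSpace ℝ (Fin d)),
      deriv (fun τ => p τ x) t + divergence (fun y => p t y • u t y) x = 0 := by
  intro t x
  have hσt := (hσpos t).ne'
  have hp_eq : ∀ τ, p τ = isotropicGaussianDensity (σ τ) (μ τ) := fun τ => funext fun y => by
    rw [hp, isotropicGaussianDensity, finrank_euclideanSpace_fin]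
  have hu_deriv : HasFDerivAt (u t)
      ((deriv σ t / σ t) • ContinuousLinearMap.id ℝ (EuclideanSpace ℝ (Fin d))) x := by
    rw [funext (hu t)]
    exact (((hasFDerivAt_id x).sub_const (μ t)).const_smul (deriv σ t / σ t)).add_const _
  have hp_deriv := (hσ t).hasDerivAt.isotropicGaussianDensity (hμ t).hasDerivAt hσt x
  rw [hp_eq t, divergence_smul (hasFDerivAt_isotropicGaussianDensity _ _ x) hu_deriv]
  simp only [hp_eq]
  rw [hp_deriv.deriv]
  simp only [hu, ContinuousLinearMap.toLinearMap_smul, map_smul, ContinuousLinearMap.coe_id,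
    LinearMap.trace_id, finrank_euclideanSpace_fin, smul_eq_mul, FunLike.coe_smul, Pi.smul_apply,
    innerSL_apply_apply, inner_add_right, real_inner_smul_right, real_inner_self_eq_norm_sq]
  field_simp
  ring

theorem gaussian_conditional_continuity_equation
    (d : ℕ) (hd : 0 < d)
    (σ : ℝ → ℝ) (hσ : Differentiable ℝ σ) (hσpos : ∀ t, 0 < σ t)
    (μ : ℝ → EuclideanSpace ℝ (Fin d)) (hμ : Differentiable ℝ μ)
    (p : ℝ → EuclideanSpace ℝ (Fin d) → ℝ)
    (hp : ∀ t x, p t x =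
      (2 * π * (σ t) ^ 2) ^ (-(d : ℝ) / 2) *
        Real.exp (-‖x - μ t‖ ^ 2 / (2 * (σ t) ^ 2)))
    (u : ℝ → EuclideanSpace ℝ (Fin d) → EuclideanSpace ℝ (Fin d))
    (hu : ∀ t x, u t x = (deriv σ t / σ t) • (x - μ t) + deriv μ t) :
    ∀ (t : ℝ) (x : EuclideanSpace ℝ (Fin d)),
      deriv (fun τ => p τ x) t + divergence (fun y => p t y • u t y) x = 0 :=
  gaussian_conditional_continuity_equation_general d σ hσ hσpos μ hμ p hp u hu
end

section
/- Let σ_x > 0 and σ_ch > 0, let t⋆ < 1, and let σ : ℝ → ℝ be differentiable with σ(t⋆) = σ_ch and σ(1) = 0. Define s(t) = √(σ_x² + σ(t)²), so s(t) > 0 for all t. Suppose x : ℝ → ℝ is differentiable on [t⋆, 1], satisfies x'(t) = (s'(t)/s(t))·x(t) for all t ∈ [t⋆, 1], and has initial condition x(t⋆) = y. Then the terminal value is x(1) = ( σ_x / √(σ_x² + σ_ch²) ) · y. In particular, the land-then-transport (LTT) decoder induced by the ideal probability-flow ODE is the linear estimator y ↦ a_LTT · y with coefficient a_LTT = σ_x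 / √(σ_x² + σ_ch²). -/
/-!
The flow `x' = (s'/s) x` is exactly the statement that `x / s` has zero derivative, so
`x 1 / s 1 = y / s t⋆`; the coefficient is `s 1 / s t⋆ = σx / √(σx² + σch²)`.
-/

open Set

theorem eq_of_hasDerivWithinAt_zero_Icc {f : ℝ → ℝ} {a b : ℝ}
    (hf : ∀ t ∈ Icc a b, HasDerivWithinAt f 0 (Icc a b) t) :
    ∀ t ∈ Icc a b, f t = f a := by
  intro t ht
  have h := norm_image_sub_le_of_norm_deriv_le_segment' hf (C := 0)
    (fun _ _ => norm_zero.le) t ht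
  simpa only [zero_mul, norm_le_zero_iff, sub_eq_zero] using h

theorem eq_div_mul_of_hasDerivWithinAt_logDeriv_mul {x s s' : ℝ → ℝ} {a b : ℝ} (hab : a ≤ b)
    (hs : ∀ t ∈ Icc a b, HasDerivWithinAt s (s' t) (Icc a b) t)
    (hs₀ : ∀ t ∈ Icc a b, s t ≠ 0)
    (hx : ∀ t ∈ Icc a b, HasDerivWithinAt x (s' t / s t * x t) (Icc a b) t) :
    x b = s b / s a * x a := by
  have hratio : ∀ t ∈ Icc a b, HasDerivWithinAt (fun u => x u / s u) 0 (Icc a b) t := by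
    intro t ht
    refine ((hx t ht).div (hs t ht) (hs₀ t ht)).congr_deriv ?_
    rw [div_mul_eq_mul_div, div_mul_cancel₀ _ (hs₀ t ht)]
    ring
  have hb : x b / s b = x a / s a := eq_of_hasDerivWithinAt_zero_Icc hratio b ⟨hab, le_rfl⟩
  have ha := hs₀ a ⟨le_rfl, hab⟩
  have hb₀ := hs₀ b ⟨hab, le_rfl⟩
  field_simp at hb ⊢
  linarith

theorem ltt_scalar_decoder_is_linear_general
    (σx σch : ℝ) (hσx : 0 < σx)
    (tstar : ℝ) (ht : tstar < 1)
    (σ : ℝ → ℝ) (hσ : Differentiable ℝ σ)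
    (hσstar : σ tstar = σch) (hσone : σ 1 = 0)
    (s : ℝ → ℝ) (hs : ∀ t, s t = Real.sqrt (σx ^ 2 + (σ t) ^ 2))
    (y : ℝ)
    (x : ℝ → ℝ)
    (hx : ∀ t ∈ Set.Icc tstar 1,
      HasDerivWithinAt x (deriv s t / s t * x t) (Set.Icc tstar 1) t)
    (hx0 : x tstar = y) :
    x 1 = σx / Real.sqrt (σx ^ 2 + σch ^ 2) * y := by
  have hvar_pos : ∀ t, 0 < σx ^ 2 + σ t ^ 2 := fun t => by positivity
  have hs_pos : ∀ t, 0 < s t := fun t => by rw [hs]; exact Real.sqrt_pos.mpr (hvar_pos t)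
  have hs_diff : Differentiable ℝ s := by
    rw [show s = fun t => Real.sqrt (σx ^ 2 + σ t ^ 2) from funext hs]
    exact ((differentiable_const _).add (hσ.pow 2)).sqrt fun t => (hvar_pos t).ne'
  have h := eq_div_mul_of_hasDerivWithinAt_logDeriv_mul ht.le
    (fun t _ => (hs_diff t).hasDerivAt.hasDerivWithinAt) (fun t _ => (hs_pos t).ne') hx
  rwa [hs 1, hs tstar, hσone, hσstar, hx0, zero_pow two_ne_zero, add_zero,
    Real.sqrt_sq hσx.le] at h

theorem ltt_scalar_decoder_is_linear
    (σx σch : ℝ) (hσx : 0 < σx) (hσch : 0 < σch)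
    (tstar : ℝ) (ht : tstar < 1)
    (σ : ℝ → ℝ) (hσ : Differentiable ℝ σ)
    (hσstar : σ tstar = σch) (hσone : σ 1 = 0)
    (s : ℝ → ℝ) (hs : ∀ t, s t = Real.sqrt (σx ^ 2 + (σ t) ^ 2))
    (y : ℝ)
    (x : ℝ → ℝ)
    (hx : ∀ t ∈ Set.Icc tstar 1,
      HasDerivWithinAt x (deriv s t / s t * x t) (Set.Icc tstar 1) t)
    (hx0 : x tstar = y) :
    x 1 = σx / Real.sqrt (σx ^ 2 + σch ^ 2) * y :=
  ltt_scalar_decoder_is_linear_general σx σch hσx tstar ht σ hσ hσstar hσone s hs y x hx hx0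
end

section
/- Let s : ℝ → ℝ be differentiable with s(t) > 0 for all t. Define the scalar Gaussian density p(t,x) = (2π s(t)²)^{-1/2} exp(−x² / (2 s(t)²)) and the linear velocity field v(t,x) = (s'(t)/s(t))·x. Then (p, v) satisfies the one-dimensional continuity equation: for all t ∈ ℝ and x ∈ ℝ, ∂_t p(t,x) + ∂_x ( p(t,x) · v(t,x) ) = 0. -/
/-!
Write `p t x = g (s t) x`, where `g σ x` is the centred Gaussian density of standard deviation `σ`.
Both terms of the continuity equation are multiples of `g σ x` by the same polynomial in `x`:
`∂_σ g = g · (x² / σ³ - 1 / σ)` and `∂_x (x g) = g · (1 - x² / σ²)`, so with `v = (s' / s) x`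
the chain rule gives `∂_t p = s' · g · (x² / σ³ - 1 / σ) = -∂_x (p v)`.
-/

open Real

noncomputable def gaussianDensity (σ x : ℝ) : ℝ :=
  (2 * π * σ ^ 2) ^ (-(1 : ℝ) / 2) * exp (-x ^ 2 / (2 * σ ^ 2))

theorem hasDerivAt_gaussianDensity_scale {σ : ℝ} (hσ : σ ≠ 0) (x : ℝ) :
    HasDerivAt (fun r => gaussianDensity r x)
      (gaussianDensity σ x * (x ^ 2 / σ ^ 3 - 1 / σ)) σ := by
  have hvar : 0 < 2 * π * σ ^ 2 := by positivity
  have hnorm : HasDerivAt (fun r : ℝ => (2 * π * r ^ 2) ^ (-(1 : ℝ) / 2))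
      (2 * π * (2 * σ ^ 1 * 1) * (-(1 : ℝ) / 2) * (2 * π * σ ^ 2) ^ (-(1 : ℝ) / 2 - 1)) σ :=
    (((hasDerivAt_id σ).pow 2).const_mul (2 * π)).rpow_const (Or.inl hvar.ne')
  have hexpo : HasDerivAt (fun r : ℝ => -x ^ 2 / (2 * r ^ 2)) (x ^ 2 / σ ^ 3) σ := by
    refine ((hasDerivAt_const σ (-x ^ 2)).div ((hasDerivAt_pow 2 σ).const_mul 2)
      (by positivity)).congr_deriv ?_
    field_simp
    ring
  refine (hnorm.mul hexpo.exp).congr_deriv ?_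
  rw [gaussianDensity, sub_eq_add_neg _ (1 : ℝ), rpow_add hvar, rpow_neg_one]
  field_simp
  ring

theorem hasDerivAt_mul_gaussianDensity (σ x : ℝ) :
    HasDerivAt (fun ξ => ξ * gaussianDensity σ ξ)
      (gaussianDensity σ x * (1 - x ^ 2 / σ ^ 2)) x := by
  have hexpo : HasDerivAt (fun ξ : ℝ => -ξ ^ 2 / (2 * σ ^ 2)) (-x / σ ^ 2) x :=
    ((hasDerivAt_pow 2 x).neg.div_const _).congr_deriv (by field_simp; ring)
  refine ((hasDerivAt_id x).mul (hexpo.exp.const_mul _)).congr_deriv ?_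
  simp only [gaussianDensity, id_eq]
  ring

theorem scalar_gaussian_continuity_equation
    (s : ℝ → ℝ) (hs : Differentiable ℝ s) (hspos : ∀ t, 0 < s t)
    (p : ℝ → ℝ → ℝ)
    (hp : ∀ t x, p t x =
      (2 * π * (s t) ^ 2) ^ (-(1 : ℝ) / 2) *
        Real.exp (-x ^ 2 / (2 * (s t) ^ 2)))
    (v : ℝ → ℝ → ℝ)
    (hv : ∀ t x, v t x = deriv s t / s t * x) :
    ∀ (t x : ℝ),
      deriv (fun τ => p τ x) t + deriv (fun ξ => p t ξ * v t ξ) x = 0 := by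
  intro t x
  have hσ : s t ≠ 0 := (hspos t).ne'
  have hp_time : (fun τ => p τ x) = fun τ => gaussianDensity (s τ) x := funext fun τ => hp τ x
  have hflux : (fun ξ => p t ξ * v t ξ) =
      fun ξ => deriv s t / s t * (ξ * gaussianDensity (s t) ξ) := by
    funext ξ
    rw [hp, hv, gaussianDensity]
    ring
  have htime : HasDerivAt (fun τ => gaussianDensity (s τ) x)
      (gaussianDensity (s t) x * (x ^ 2 / s t ^ 3 - 1 / s t) * deriv s t) t :=
    (hasDerivAt_gaussianDensity_scale hσ x).comp t (hs t).hasDerivAt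
  rw [hp_time, hflux, htime.deriv,
    ((hasDerivAt_mul_gaussianDensity (s t) x).const_mul _).deriv]
  field_simp
  ring
end

section
/- Fix σ_x > 0 and, for σ > 0, define a_LTT(σ) = σ_x / √(σ_x² + σ²) and a_MMSE(σ) = σ_x² / (σ_x² + σ²). Then, as σ → 0⁺, (σ_x² + σ²)·( a_LTT(σ) − a_MMSE(σ) )² = σ⁴ / (4 σ_x²) + o(σ⁴); equivalently, the limit as σ → 0⁺ of (σ_x² + σ²)·( a_LTT(σ) − a_MMSE(σ) )² / σ⁴ equals 1 / (4 σ_x²). Consequently, the excess mean-squared error of the LTT decoder over the MMSE estimator in the scalar Gaussian channel model, which equals (σ_x² + σ²)(a_LTT(σ) − a_MMSE(σ))², is O(σ⁴) in the high-SNR regime σ → 0⁺. -/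
/-!
Rationalizing, `√(σx² + σ²) - σx = σ² / (√(σx² + σ²) + σx)`, so the excess is exactly
`g(σ) σ⁴` with `g(σ) = σx² / ((σx² + σ²)(√(σx² + σ²) + σx)²)`. The coefficient `g` is continuous
at `0` with `g(0) = 1 / (4 σx²)`, and all three asymptotic statements follow from that limit.
-/

open Filter Asymptotics Topology

noncomputable def lttExcessCoeff (a σ : ℝ) : ℝ :=
  a ^ 2 / ((a ^ 2 + σ ^ 2) * (Real.sqrt (a ^ 2 + σ ^ 2) + a) ^ 2)

theorem lttExcessCoeff_mul_pow_four {a : ℝ} (ha : 0 ≤ a) (σ : ℝ) :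
    lttExcessCoeff a σ * σ ^ 4
      = (a ^ 2 + σ ^ 2) * (a / Real.sqrt (a ^ 2 + σ ^ 2) - a ^ 2 / (a ^ 2 + σ ^ 2)) ^ 2 := by
  rcases ha.eq_or_lt with rfl | ha
  · simp [lttExcessCoeff]
  rw [lttExcessCoeff]
  set t := Real.sqrt (a ^ 2 + σ ^ 2)
  have ht : 0 < t := Real.sqrt_pos.2 (by positivity)
  have hts : a ^ 2 + σ ^ 2 = t ^ 2 := (Real.sq_sqrt (by positivity)).symm
  have hσ : σ ^ 2 = (t - a) * (t + a) := by linear_combination hts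
  rw [hts, show σ ^ 4 = (σ ^ 2) ^ 2 by ring, hσ]
  field_simp

theorem tendsto_lttExcessCoeff {a : ℝ} (ha : 0 < a) :
    Tendsto (lttExcessCoeff a) (𝓝 0) (𝓝 (1 / (4 * a ^ 2))) := by
  have hcont : ContinuousAt (lttExcessCoeff a) 0 := by
    have : (a ^ 2 + 0 ^ 2) * (Real.sqrt (a ^ 2 + 0 ^ 2) + a) ^ 2 ≠ 0 := by positivity
    unfold lttExcessCoeff
    fun_prop (disch := exact this)
  convert hcont.tendsto using 2
  rw [lttExcessCoeff, zero_pow two_ne_zero, add_zero, Real.sqrt_sq ha.le]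
  field_simp
  ring

theorem isLittleO_mul_sub_const_mul {α : Type*} {l : Filter α} {g : α → ℝ} {c : ℝ}
    (hg : Tendsto g l (𝓝 c)) (h : α → ℝ) :
    (fun x => g x * h x - c * h x) =o[l] h := by
  have : (fun x => g x - c) =o[l] (fun _ => (1 : ℝ)) :=
    (isLittleO_one_iff ℝ).2 (by simpa using hg.sub_const c)
  simpa [sub_mul] using this.mul_isBigO (isBigO_refl h l)

theorem ltt_excess_mse_high_snr
    (σx : ℝ) (hσx : 0 < σx)
    (aLTT aMMSE : ℝ → ℝ)
    (haLTT : ∀ σ, aLTT σ = σx / Real.sqrt (σx ^ 2 + σ ^ 2))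
    (haMMSE : ∀ σ, aMMSE σ = σx ^ 2 / (σx ^ 2 + σ ^ 2)) :
    (fun σ : ℝ => (σx ^ 2 + σ ^ 2) * (aLTT σ - aMMSE σ) ^ 2 - σ ^ 4 / (4 * σx ^ 2))
        =o[nhdsWithin 0 (Set.Ioi 0)] (fun σ : ℝ => σ ^ 4)
      ∧ Tendsto
          (fun σ : ℝ => (σx ^ 2 + σ ^ 2) * (aLTT σ - aMMSE σ) ^ 2 / σ ^ 4)
          (nhdsWithin 0 (Set.Ioi 0)) (nhds (1 / (4 * σx ^ 2)))
      ∧ (fun σ : ℝ => (σx ^ 2 + σ ^ 2) * (aLTT σ - aMMSE σ) ^ 2)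
          =O[nhdsWithin 0 (Set.Ioi 0)] (fun σ : ℝ => σ ^ 4) := by
  have hexcess (σ : ℝ) :
      (σx ^ 2 + σ ^ 2) * (aLTT σ - aMMSE σ) ^ 2 = lttExcessCoeff σx σ * σ ^ 4 := by
    rw [haLTT, haMMSE, lttExcessCoeff_mul_pow_four hσx.le]
  have hlim : Tendsto (lttExcessCoeff σx) (𝓝[>] 0) (𝓝 (1 / (4 * σx ^ 2))) :=
    (tendsto_lttExcessCoeff hσx).mono_left nhdsWithin_le_nhds
  simp only [hexcess]
  refine ⟨?_, ?_, ?_⟩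
  · simpa [div_eq_inv_mul] using isLittleO_mul_sub_const_mul hlim (· ^ 4)
  · refine hlim.congr' ?_
    filter_upwards [self_mem_nhdsWithin] with σ (hσ : 0 < σ)
    exact (mul_div_cancel_right₀ _ (by positivity)).symm
  · simpa using (hlim.isBigO_one ℝ).mul (isBigO_refl (· ^ 4) _)
end
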